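/- arXiv:math/0412033 — 7 statements merged into one kernel-verified Lean document; each statement's English description precedes it below -/
import Mathlib

section
/- The determinant of the r×r matrix whose (i,j) entry is the binomial coefficient C(a, b+i-j) equals the product over t from 0 to r-1 of C(a+r-1-t, b) / C(b+t, b) (van Zeipel's identity), as an identity of rational numbers, for natural numbers a, b, r with the convention C(n,k)=0 for k<0 or k>n. -/
/-- Binomial coefficient with integer lower index, zero when the index is negative. -/
def ch (n : ℕ) (k : ℤ) : ℤ := if 0 ≤ k then n.choose k.toNat else 0

/-!
Put `n = r - 1`, `x_i = b + i` and `y_i = a + n - x_i`. Expanding factorials,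
`C(a, x_i - j) = a! / (x_i! y_i!) · C(x_i, j) C(y_i, n - j) · j! (n - j)!`, so up to diagonal
factors on both sides the matrix is `B = (C(x_i, j) C(y_i, n - j))`. Since `x_i + y_i = a + n`,
Chu–Vandermonde gives `B · (C(k, j)) = (C(x_i, j)) · diag(C(a + n - j, n - j))`. The Pascal
matrix `(C(k, j))` is unitriangular, and `(C(b + i, j))` has determinant `1` because scaling its
columns by `j!` turns it into a falling-factorial Vandermonde matrix with determinant `∏ j!`.
When `b > a` the last row vanishes, and so does the factor `C(a, b)` on the right.
-/

open Finset Matrix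
open scoped Nat

namespace Nat

theorem sum_range_choose_mul_choose_mul_choose {x y n j : ℕ} (hj : j ≤ n) :
    ∑ k ∈ range (n + 1), x.choose k * y.choose (n - k) * k.choose j =
      x.choose j * (x + y - j).choose (n - j) := by
  rcases lt_or_ge x j with hxj | hjx
  · rw [choose_eq_zero_of_lt hxj, zero_mul]
    refine sum_eq_zero fun k _ => ?_
    rcases lt_or_ge x k with hxk | hkx
    · simp [choose_eq_zero_of_lt hxk]
    · simp [choose_eq_zero_of_lt (hkx.trans_lt hxj)]
  obtain ⟨d, rfl⟩ := exists_add_of_le hj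
  rw [add_assoc, sum_range_add, sum_eq_zero fun k hk => by
    simp [choose_eq_zero_of_lt (mem_range.1 hk)], zero_add]
  calc ∑ m ∈ range (d + 1), x.choose (j + m) * y.choose (j + d - (j + m)) * (j + m).choose j
      = ∑ m ∈ range (d + 1), x.choose j * ((x - j).choose m * y.choose (d - m)) := by
        refine sum_congr rfl fun m _ => ?_
        rw [mul_right_comm, choose_mul (le_add_right j m)]
        simp only [add_tsub_cancel_left, Nat.add_sub_add_left]
        ring
    _ = x.choose j * (x + y - j).choose (j + d - j) := by
        rw [← mul_sum, ← Finset.Nat.sum_antidiagonal_eq_sum_range_succ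
          (fun p q => (x - j).choose p * y.choose q), ← add_choose_eq, add_tsub_cancel_left,
          Nat.sub_add_comm hjx]

end Nat

namespace Matrix

variable {R : Type*} [CommRing R]

theorem det_of_choose (r : ℕ) : (of fun i j : Fin r => ((i : ℕ).choose j : R)).det = 1 := by
  rw [det_of_isLowerTriangular _ fun i j hij => ?_]
  · simp
  · simp [Nat.choose_eq_zero_of_lt (show (i : ℕ) < j from hij)]

theorem det_of_add_choose [IsDomain R] [CharZero R] (m r : ℕ) :
    (of fun i j : Fin r => ((m + i : ℕ).choose j : R)).det = 1 := by
  obtain _ | n := r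
  · simp
  have hfact : (∏ j : Fin (n + 1), ((j : ℕ)! : R)) ≠ 0 :=
    prod_ne_zero_iff.2 fun j _ => by exact_mod_cast (j : ℕ).factorial_ne_zero
  refine (mul_eq_left₀ hfact).1 ?_
  rw [← det_mul_row]
  calc (of fun i j : Fin (n + 1) => ((j : ℕ)! : R) * ((m + i : ℕ).choose j : R)).det
      = (of fun i j : Fin (n + 1) => (descPochhammer R j).eval ((i : R) + m)).det := by
        congr 1; ext i j : 2
        rw [of_apply, of_apply, ← Nat.cast_add, descPochhammer_eval_eq_descFactorial,
          Nat.add_comm (i : ℕ), Nat.descFactorial_eq_factorial_mul_choose, Nat.cast_mul]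
    _ = (vandermonde fun i : Fin (n + 1) => (i : R) + m).det :=
        (det_eval_matrixOfPolynomials_eq_det_vandermonde _ _ (descPochhammer_natDegree R ·)
          (monic_descPochhammer R ·)).symm
    _ = ∏ j : Fin (n + 1), ((j : ℕ)! : R) := by
        rw [det_vandermonde_add, det_vandermonde_id_eq_superFactorial,
          ← Nat.prod_range_succ_factorial, Nat.cast_prod,
          Fin.prod_univ_eq_prod_range (fun j => (j ! : R))]

theorem det_of_choose_mul_choose [IsDomain R] [CharZero R] {m c n : ℕ} (h : m + n ≤ c) :
    (of fun i j : Fin (n + 1) => ((m + i).choose j * (c - (m + i)).choose (n - j) : R)).det =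
      ∏ j : Fin (n + 1), ((c - j).choose (n - j) : R) := by
  have hmul :
      (of fun i j : Fin (n + 1) => ((m + i).choose j * (c - (m + i)).choose (n - j) : R)) *
        of (fun k j : Fin (n + 1) => ((k : ℕ).choose j : R)) =
      (of fun i j : Fin (n + 1) => ((m + i : ℕ).choose j : R)) *
        diagonal fun j : Fin (n + 1) => ((c - j).choose (n - j) : R) := by
    ext i j
    rw [mul_diagonal, mul_apply]
    simp only [of_apply]
    rw [Fin.sum_univ_eq_sum_range
      (fun k => ((m + i).choose k * (c - (m + i)).choose (n - k) : R) * (k.choose j : R))]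
    have hc : m + i + (c - (m + i)) = c := by omega
    exact_mod_cast hc ▸ Nat.sum_range_choose_mul_choose_mul_choose (Fin.is_le j)
  simpa [det_of_choose, det_of_add_choose] using congrArg det hmul

end Matrix

theorem ch_natCast (n k : ℕ) : ch n k = n.choose k := by simp [ch]

theorem ch_of_neg {n : ℕ} {k : ℤ} (hk : k < 0) : ch n k = 0 := by simp [ch, hk.not_ge]

theorem ch_of_lt {n : ℕ} {k : ℤ} (hk : n < k) : ch n k = 0 := by
  lift k to ℕ using by omega
  rw [ch_natCast, Nat.choose_eq_zero_of_lt (by omega), Nat.cast_zero]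

theorem ch_sub_eq_choose_mul_choose {a n x y j : ℕ} (hxy : x + y = a + n) (hj : j ≤ n) :
    (ch a ((x : ℤ) - j) : ℚ) =
      a ! / (x ! * y !) * (x.choose j * y.choose (n - j)) * (j ! * (n - j)!) := by
  rcases lt_or_ge x j with hxj | hjx
  · simp [ch_of_neg (by omega : (x : ℤ) - j < 0), Nat.choose_eq_zero_of_lt hxj]
  rcases lt_or_ge y (n - j) with hy | hy
  · simp [ch_of_lt (by omega : (a : ℤ) < x - j), Nat.choose_eq_zero_of_lt hy]
  obtain ⟨k, rfl⟩ := exists_add_of_le hjx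
  obtain ⟨l, rfl⟩ := exists_add_of_le hy
  obtain rfl : a = k + l := by omega
  rw [show ((j + k : ℕ) : ℤ) - j = k by push_cast; ring, ch_natCast, Int.cast_natCast,
    Nat.cast_add_choose, Nat.cast_add_choose, Nat.cast_add_choose]
  field_simp

theorem factorial_div_mul_choose_mul_factorial {a b n t : ℕ} (hb : b ≤ a) (ht : t ≤ n) :
    (a ! / ((b + t)! * (a + n - (b + t))!) : ℚ) * (a + n - t).choose (n - t) *
        (t ! * (n - t)!) =
      (a + n - t).choose b / (b + t).choose b := by
  obtain ⟨u, rfl⟩ := exists_add_of_le ht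
  obtain ⟨s, rfl⟩ := exists_add_of_le hb
  rw [show b + s + (t + u) - t = b + (s + u) by omega,
    show b + s + (t + u) - (b + t) = s + u by omega, show t + u - t = u by omega,
    Nat.cast_add_choose, Nat.cast_add_choose,
    show b + (s + u) = b + s + u by omega, Nat.cast_choose ℚ (Nat.le_add_left u (b + s)),
    Nat.add_sub_cancel]
  field_simp

/-- van Zeipel's identity: the determinant of the r×r matrix with (i,j) entry
C(a, b+i-j) equals ∏_{t=0}^{r-1} C(a+r-1-t, b) / C(b+t, b), over ℚ. -/
theorem vanZeipel (a b r : ℕ) (hr : 1 ≤ r) :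
    Matrix.det (Matrix.of fun i j : Fin r => ((ch a ((b : ℤ) + (i : ℕ) - (j : ℕ)) : ℤ) : ℚ)) =
      ∏ t ∈ Finset.range r,
        (((a + r - 1 - t).choose b : ℚ) / ((b + t).choose b : ℚ)) := by
  obtain ⟨n, rfl⟩ : ∃ n, r = n + 1 := ⟨r - 1, by omega⟩
  rw [Nat.add_succ_sub_one]
  rcases le_or_gt b a with hab | hba
  · have hfactor :
        (of fun i j : Fin (n + 1) => ((ch a ((b : ℤ) + (i : ℕ) - (j : ℕ)) : ℤ) : ℚ)) =
          diagonal (fun i : Fin (n + 1) => (a ! / ((b + i)! * (a + n - (b + i))!) : ℚ)) *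
            (of fun i j : Fin (n + 1) =>
              ((b + i).choose j * (a + n - (b + i)).choose (n - j) : ℚ)) *
            diagonal (fun j : Fin (n + 1) => ((j : ℕ)! * (n - j)! : ℚ)) := by
      ext i j
      rw [mul_diagonal, diagonal_mul, of_apply, of_apply, ← Nat.cast_add]
      exact ch_sub_eq_choose_mul_choose (by omega) j.is_le
    rw [hfactor, det_mul, det_mul, det_diagonal, det_diagonal,
      det_of_choose_mul_choose (by omega : b + n ≤ a + n), ← prod_mul_distrib,
      ← prod_mul_distrib, prod_range]
    exact prod_congr rfl fun t _ => factorial_div_mul_choose_mul_factorial hab t.is_le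
  · rw [det_eq_zero_of_row_eq_zero (Fin.last n) fun j => ?_,
      prod_eq_zero (mem_range.2 (Nat.lt_succ_self n)) (by simp [Nat.choose_eq_zero_of_lt hba])]
    rw [of_apply, ch_of_lt (by rw [Fin.val_last]; omega), Int.cast_zero]
end

section
/- For any natural numbers a, b, r, s, the r×s matrix with (i,j) entry C(a, b+i-j) can be transformed by elementary column operations (adding one column to another) into the matrix with (i,j) entry C(a+j-1, b+i-1); in particular the two matrices have the same column span. -/
/-!
Right multiplication by the unitriangular Pascal matrix `(C(j, k))_{k,j}` is a product of
elementary column operations, and it sends the column `(C(a, b+i-k))_k` to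
`∑_k C(a, b+i-k) C(j, k) = C(a+j, b+i)` by Vandermonde's identity; the truncation `k < s` is
harmless because `C(j, k) = 0` for `k > j`.
-/

open Finset

lemma ch_natCast_sub_of_le (n : ℕ) {m k : ℕ} (h : k ≤ m) :
    ch n ((m : ℤ) - k) = n.choose (m - k) := by
  rw [ch, if_pos (by omega), show ((m : ℤ) - k).toNat = m - k by omega]

lemma ch_natCast_sub_of_lt (n : ℕ) {m k : ℕ} (h : m < k) : ch n ((m : ℤ) - k) = 0 :=
  if_neg (by omega)

lemma sum_range_ch_sub_mul_choose (a b : ℕ) {j N : ℕ} (hj : j < N) :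
    ∑ k ∈ range N, ch a ((b : ℤ) - k) * j.choose k = (a + j).choose b := by
  set M := max N (b + 1)
  calc ∑ k ∈ range N, ch a ((b : ℤ) - k) * j.choose k
      = ∑ k ∈ range M, ch a ((b : ℤ) - k) * j.choose k := by
        refine sum_subset (range_subset_range.2 (le_max_left _ _)) fun k _ hk => ?_
        rw [Nat.choose_eq_zero_of_lt (by simp at hk; omega), Nat.cast_zero, mul_zero]
    _ = ∑ k ∈ range (b + 1), ch a ((b : ℤ) - k) * j.choose k := by
        refine (sum_subset (range_subset_range.2 (le_max_right _ _)) fun k _ hk => ?_).symm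
        rw [ch_natCast_sub_of_lt a (by simp at hk; omega), zero_mul]
    _ = ∑ k ∈ range (b + 1), ((j.choose k * a.choose (b - k) : ℕ) : ℤ) := by
        refine sum_congr rfl fun k hk => ?_
        rw [ch_natCast_sub_of_le a (by simp at hk; omega), Nat.cast_mul, mul_comm]
    _ = (a + j).choose b := by
        rw [add_comm a j, Nat.add_choose_eq, Nat.sum_antidiagonal_eq_sum_range_succ_mk,
          Nat.cast_sum]

def pascalMatrix (R : Type*) [Semiring R] (s : ℕ) : Matrix (Fin s) (Fin s) R :=
  Matrix.of fun k j => ((j : ℕ).choose k : R)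

lemma det_pascalMatrix (R : Type*) [CommRing R] (s : ℕ) : (pascalMatrix R s).det = 1 := by
  rw [Matrix.det_of_isUpperTriangular]
  · simp [pascalMatrix]
  · intro k j hjk
    simp [pascalMatrix, Nat.choose_eq_zero_of_lt (show (j : ℕ) < k from hjk)]

/-- The r×s matrix with (i,j) entry C(a, b+i-j) can be transformed by elementary
column operations (encoded by right multiplication by a matrix of determinant 1)
into the matrix with (i,j) entry C(a+j-1, b+i-1); in particular the two matrices
have the same column span. -/
theorem columnOperations {R : Type*} [CommRing R] (a b r s : ℕ) :
    ∃ U : Matrix (Fin s) (Fin s) R, U.det = 1 ∧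
      (Matrix.of fun (i : Fin r) (j : Fin s) =>
          ((ch a ((b : ℤ) + (i : ℕ) - (j : ℕ)) : ℤ) : R)) * U =
      Matrix.of (fun (i : Fin r) (j : Fin s) =>
          (((a + (j : ℕ)).choose (b + (i : ℕ)) : ℕ) : R)) := by
  refine ⟨pascalMatrix R s, det_pascalMatrix R s, ?_⟩
  ext i j
  have hvandermonde := sum_range_ch_sub_mul_choose a (b + i) j.isLt
  simp only [Matrix.mul_apply, Matrix.of_apply, pascalMatrix]
  rw [Fin.sum_univ_eq_sum_range (fun k => ((ch a ((b : ℤ) + i - k) : ℤ) : R) * (j.val.choose k : R)),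
    ← Int.cast_natCast (R := R), ← hvandermonde]
  push_cast
  rfl
end

section
/- Let p be a prime with p ≡ 3 (mod 7), write p = 7ℓ+3, and let K be a field of characteristic p. Then the (2ℓ+1)×(2ℓ+1) matrix over K with (i,j) entry C(4ℓ+2, 2ℓ+1+i-j) (binomial coefficients reduced mod p) is invertible. -/
/-!
Reversing the columns turns the matrix into the Hankel matrix `(C(m, i + j + 1))_{i,j<n}` with
`m = 4ℓ + 2`, `n = 2ℓ + 1`. Scaling column `j` by `(j + n)! (m - 1 - j)! / m!` turns its `(i, j)`
entry into `Q_i(j)`, where `Q_i(X) = (X + i + 2)⋯(X + n) · (m - 1 - X)⋯(m - i - X)` has degree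
`n - 1`. A matrix `(Q_i(x_j))` factors through the coefficient matrix of the `Q_i` and a
Vandermonde matrix, so it is invertible as soon as the `x_j` are distinct and `(Q_i(y_k))` is
invertible for some other points `y_k`. The points `y_k = m - 1 - k` make `(Q_i(y_k))` triangular,
and all numbers occurring on its diagonal and in the scalings are at most `m + n - 1 = 6ℓ + 2 < p`.
-/

open Finset Polynomial Matrix Nat

theorem Nat.choose_mul_factorial_add_mul_factorial_add {m a : ℕ} (h : a ≤ m) (r s : ℕ) :
    m.choose a * ((a + r)! * (m - a + s)!) =
      m ! * ((a + 1).ascFactorial r * (m - a + s).descFactorial s) := by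
  rw [← factorial_mul_ascFactorial a r, ← factorial_mul_descFactorial (le_add_left s (m - a)),
    Nat.add_sub_cancel, ← choose_mul_factorial_mul_factorial h]
  ring

section

variable {R : Type*} [CommRing R]

theorem Matrix.of_eval_eq_of_coeff_mul_vandermonde_transpose {n : ℕ} (Q : Fin n → R[X])
    (hQ : ∀ i, (Q i).natDegree < n) (x : Fin n → R) :
    of (fun i j => (Q i).eval (x j)) =
      of (fun i k : Fin n => (Q i).coeff k) * (vandermonde x)ᵀ := by
  ext i j
  rw [of_apply, eval_eq_sum_range' (hQ i), mul_apply, ← Fin.sum_univ_eq_sum_range]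
  rfl

theorem Matrix.det_eval_ne_zero_of_det_eval_ne_zero [IsDomain R] {n : ℕ} {Q : Fin n → R[X]}
    (hQ : ∀ i, (Q i).natDegree < n) {x : Fin n → R} (hx : Function.Injective x)
    {y : Fin n → R} (hy : (of fun i k => (Q i).eval (y k)).det ≠ 0) :
    (of fun i j => (Q i).eval (x j)).det ≠ 0 := by
  rw [of_eval_eq_of_coeff_mul_vandermonde_transpose Q hQ, det_mul, det_transpose] at hy ⊢
  exact mul_ne_zero (left_ne_zero_of_mul hy) (det_vandermonde_ne_zero_iff.mpr hx)

theorem natCast_fin_injective_of_factorial_ne_zero {N n : ℕ} (hN : (N ! : R) ≠ 0)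
    (hn : n ≤ N + 1) : Function.Injective fun j : Fin n => ((j : ℕ) : R) := by
  intro a b hab
  wlog hlt : (a : ℕ) < b generalizing a b
  · rcases lt_or_ge (b : ℕ) a with h | h
    · exact (this hab.symm h).symm
    · exact Fin.ext (by omega)
  have hsub : (((b : ℕ) - a : ℕ) : R) = 0 := by
    rw [Nat.cast_sub hlt.le]
    exact sub_eq_zero.mpr hab.symm
  exact absurd hsub
    (ne_zero_of_dvd_ne_zero hN (Nat.cast_dvd_cast (Nat.dvd_factorial (by omega) (by omega))))

variable (R) in
/-- The polynomial `Q_i` of the sketch above, with `c = m - 1`. -/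
noncomputable def chooseHankelPoly (c n i : ℕ) : R[X] :=
  (ascPochhammer R (n - 1 - i)).comp (X + C ((i + 2 : ℕ) : R)) *
    (descPochhammer R i).comp (C (c : R) - X)

theorem natDegree_chooseHankelPoly_lt [IsDomain R] {c n i : ℕ} (hi : i < n) :
    (chooseHankelPoly R c n i).natDegree < n := by
  have hlin : (C (c : R) - X).natDegree = 1 := by
    rw [natDegree_sub_eq_right_of_natDegree_lt] <;> simp
  calc _ ≤ _ := natDegree_mul_le
    _ = n - 1 - i + i := by
      rw [natDegree_comp, natDegree_comp, ascPochhammer_natDegree, descPochhammer_natDegree,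
        natDegree_X_add_C, hlin, mul_one, mul_one]
    _ < n := by omega

theorem eval_chooseHankelPoly_natCast {c n i x : ℕ} (hx : x ≤ c) :
    (chooseHankelPoly R c n i).eval (x : R) =
      ((x + i + 2).ascFactorial (n - 1 - i) * (c - x).descFactorial i : ℕ) := by
  simp only [chooseHankelPoly, eval_mul, eval_comp, eval_add, eval_sub, eval_X, eval_C,
    Nat.cast_mul, cast_ascFactorial, ← descPochhammer_eval_eq_descFactorial, Nat.cast_sub hx]
  push_cast
  ring_nf

theorem det_eval_chooseHankelPoly_sub_ne_zero [IsDomain R] {c n : ℕ} (hn : n ≤ c + 1)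
    (hR : ((c + n)! : R) ≠ 0) :
    (of fun i k : Fin n => (chooseHankelPoly R c n i).eval ((c - k : ℕ) : R)).det ≠ 0 := by
  have hentry (i k : Fin n) : (chooseHankelPoly R c n i).eval ((c - k : ℕ) : R) =
      ((c - k + i + 2).ascFactorial (n - 1 - i) * (k : ℕ).descFactorial i : ℕ) := by
    rw [eval_chooseHankelPoly_natCast (Nat.sub_le _ _), Nat.sub_sub_self (by omega)]
  have htriangular : (of fun i k : Fin n =>
      (chooseHankelPoly R c n i).eval ((c - k : ℕ) : R)).IsUpperTriangular := by
    intro i k (hki : k < i)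
    rw [of_apply, hentry, Nat.descFactorial_eq_zero_iff_lt.mpr hki, mul_zero, Nat.cast_zero]
  rw [det_of_isUpperTriangular htriangular, prod_ne_zero_iff]
  intro i _
  have hasc : (c + 2).ascFactorial (n - 1 - i) ∣ (c + n)! :=
    (Dvd.intro_left _ (factorial_mul_ascFactorial (c + 1) _)).trans
      (factorial_dvd_factorial (by omega))
  have hdesc : (i : ℕ).descFactorial i ∣ (c + n)! := by
    rw [descFactorial_self]
    exact factorial_dvd_factorial (by omega)
  rw [of_apply, hentry, Nat.sub_add_cancel (by omega), Nat.cast_mul]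
  exact mul_ne_zero (ne_zero_of_dvd_ne_zero hR (Nat.cast_dvd_cast hasc))
    (ne_zero_of_dvd_ne_zero hR (Nat.cast_dvd_cast hdesc))

theorem det_choose_hankel_ne_zero [IsDomain R] {m n : ℕ} (hnm : 2 * n ≤ m + 1)
    (hR : ((m + n - 1)! : R) ≠ 0) :
    (of fun i j : Fin n => (m.choose (i + j + 1) : R)).det ≠ 0 := by
  obtain rfl | hn := n.eq_zero_or_pos
  · simp
  set colScale : Fin n → R := fun j => (((j + n)! * (m - 1 - j)! : ℕ) : R)
  have hentry (i j : Fin n) : colScale j * (m.choose (i + j + 1) : R) =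
      (m ! : R) * (chooseHankelPoly R (m - 1) n i).eval ((j : ℕ) : R) := by
    have h := Nat.choose_mul_factorial_add_mul_factorial_add (m := m) (a := i + j + 1)
      (by omega) (n - 1 - i) i
    rw [show (i : ℕ) + j + 1 + (n - 1 - i) = j + n by omega,
      show m - (i + j + 1) + i = m - 1 - j by omega,
      show (i : ℕ) + j + 1 + 1 = j + i + 2 by omega] at h
    rw [eval_chooseHankelPoly_natCast (by omega), mul_comm, ← Nat.cast_mul, ← Nat.cast_mul, h]
  have hscaled : (of fun i j : Fin n => (m.choose (i + j + 1) : R)) * diagonal colScale =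
      (m ! : R) • of fun i j : Fin n => (chooseHankelPoly R (m - 1) n i).eval ((j : ℕ) : R) := by
    ext i j
    rw [mul_diagonal, Matrix.smul_apply, of_apply, of_apply, smul_eq_mul, mul_comm, hentry]
  have hpoly : (of fun i j : Fin n =>
      (chooseHankelPoly R (m - 1) n i).eval ((j : ℕ) : R)).det ≠ 0 :=
    det_eval_ne_zero_of_det_eval_ne_zero (fun i => natDegree_chooseHankelPoly_lt i.isLt)
      (natCast_fin_injective_of_factorial_ne_zero (N := m + n - 1) hR (by omega))
      (det_eval_chooseHankelPoly_sub_ne_zero (c := m - 1) (by omega)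
        (by rwa [show m - 1 + n = m + n - 1 by omega]))
  have hm : (m ! : R) ≠ 0 :=
    ne_zero_of_dvd_ne_zero hR (Nat.cast_dvd_cast (factorial_dvd_factorial (by omega)))
  intro hdet
  have := congrArg det hscaled
  rw [det_mul, hdet, zero_mul, det_smul] at this
  exact mul_ne_zero (pow_ne_zero _ hm) hpoly this.symm

end

/-- For a prime p = 7ℓ+3 and K of characteristic p, the (2ℓ+1)×(2ℓ+1) matrix
with (i,j) entry C(4ℓ+2, 2ℓ+1+i-j) is invertible over K. -/
theorem matrixInvertible {K : Type*} [Field K] (p ℓ : ℕ) (hp : p.Prime)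
    (hpl : p = 7 * ℓ + 3) [CharP K p] :
    IsUnit (Matrix.det (Matrix.of fun i j : Fin (2 * ℓ + 1) =>
      ((ch (4 * ℓ + 2) ((2 * ℓ + 1 + (i : ℕ) : ℤ) - (j : ℕ)) : ℤ) : K))) := by
  have hK : ((4 * ℓ + 2 + (2 * ℓ + 1) - 1)! : K) ≠ 0 := by
    rw [Ne, CharP.cast_eq_zero_iff K p, hp.dvd_factorial]
    omega
  have hhankel := det_choose_hankel_ne_zero (m := 4 * ℓ + 2) (by omega) hK
  have hreverse : (of fun i j : Fin (2 * ℓ + 1) => ((4 * ℓ + 2).choose (i + j + 1) : K)) =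
      (of fun i j : Fin (2 * ℓ + 1) =>
        ((ch (4 * ℓ + 2) ((2 * ℓ + 1 + (i : ℕ) : ℤ) - (j : ℕ)) : ℤ) : K)).submatrix
          id Fin.revPerm := by
    ext i j
    have hj := j.isLt
    rw [submatrix_apply, of_apply, of_apply, id, Fin.revPerm_apply, Fin.val_rev, ch,
      if_pos (by omega), show (2 * ℓ + 1 + (i : ℕ) : ℤ) - ((2 * ℓ + 1 - (j + 1) : ℕ) : ℤ) =
        ((i + j + 1 : ℕ) : ℤ) by omega, Int.toNat_natCast, Int.cast_natCast]
  rw [hreverse, det_permute'] at hhankel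
  exact isUnit_iff_ne_zero.mpr (right_ne_zero_of_mul hhankel)
end

section
/- Let ℓ ≥ 1 and let p = 7ℓ+2 be prime. Then the ℓ×ℓ matrix over ℤ/pℤ with (i,j) entry C(2ℓ+1, i-j+1) (with C(n,k)=0 for k<0) has determinant equal to the product over t from 0 to ℓ-1 of (3ℓ-t)/(1+t) mod p, and in particular is invertible modulo p. -/
/-!
The matrix is the lower triangular Toeplitz matrix `T_f`, `T_f i j = [X^(i-j)] f`, of
`f = (1 + X)^(2ℓ+1)` with its first row and last column deleted, i.e. a cofactor of its
corner entry. Since `f ↦ T_f` is multiplicative and `det T_f = 1`, the adjugate of `T_f` is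
`T_(f⁻¹)`, and `f⁻¹ = ∑ (-1)^k C(2ℓ+k, k) X^k` shows that the determinant is `C(3ℓ, ℓ)`.
Writing `C(3ℓ, ℓ) = ∏ (3ℓ-t)/(1+t)`, every factor is a unit mod `p` because `3ℓ < p`.
-/

open Finset Matrix
open scoped Nat

namespace PowerSeries

variable {R : Type*} [CommRing R]

noncomputable def toeplitzLower (f : R⟦X⟧) (m : ℕ) : Matrix (Fin m) (Fin m) R :=
  Matrix.of fun i j => if j ≤ i then coeff (i - j : ℕ) f else 0

theorem toeplitzLower_one (m : ℕ) : toeplitzLower (1 : R⟦X⟧) m = 1 := by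
  ext i j
  simp only [toeplitzLower, coeff_one, of_apply, one_apply, Fin.ext_iff, Fin.le_def]
  split_ifs <;> first | rfl | omega

theorem toeplitzLower_mul (f g : R⟦X⟧) (m : ℕ) :
    toeplitzLower (f * g) m = toeplitzLower f m * toeplitzLower g m := by
  ext i j
  simp only [toeplitzLower, of_apply, mul_apply, ite_mul, zero_mul, mul_ite, mul_zero, Fin.le_def]
  rw [Fin.sum_univ_eq_sum_range
    (fun k => if j ≤ k then if k ≤ i then coeff (i - k) f * coeff (k - j) g else 0 else 0)]
  split_ifs with hji
  · rw [← sum_filter, ← sum_filter, filter_filter,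
      show (range m).filter (fun k : ℕ => j ≤ k ∧ k ≤ i) = Ico (j : ℕ) (i + 1) by
        ext k; simp only [mem_filter, mem_range, mem_Ico]; omega,
      sum_Ico_eq_sum_range, mul_comm, coeff_mul, Nat.sum_antidiagonal_eq_sum_range_succ
        (fun a b => coeff a g * coeff b f)]
    refine sum_congr (by congr 1; omega) fun t ht => ?_
    rw [mul_comm, Nat.add_sub_cancel_left, Nat.sub_sub]
  · refine (sum_eq_zero fun k _ => ?_).symm
    split_ifs <;> first | rfl | omega

theorem det_toeplitzLower (f : R⟦X⟧) (m : ℕ) :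
    (toeplitzLower f m).det = constantCoeff f ^ m := by
  rw [det_of_isLowerTriangular (toeplitzLower f m) fun i j hij => if_neg (not_le.mpr hij)]
  simp [toeplitzLower]

theorem det_toeplitzLower_submatrix_succ_castSucc {f g : R⟦X⟧} (hfg : f * g = 1) (m : ℕ) :
    ((toeplitzLower f (m + 1)).submatrix Fin.succ Fin.castSucc).det =
      (-1) ^ m * constantCoeff f ^ (m + 1) * coeff m g := by
  set B := toeplitzLower f (m + 1)
  have hadj : adjugate B = B.det • toeplitzLower g (m + 1) :=
    calc adjugate B = adjugate B * (B * toeplitzLower g (m + 1)) := by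
          rw [← toeplitzLower_mul, hfg, toeplitzLower_one, Matrix.mul_one]
      _ = B.det • toeplitzLower g (m + 1) := by
          rw [← Matrix.mul_assoc, adjugate_mul, Matrix.smul_mul, Matrix.one_mul]
  have hcorner := congrFun (congrFun hadj (Fin.last m)) 0
  rw [adjugate_fin_succ_eq_det_submatrix, Fin.succAbove_zero, Fin.succAbove_last,
    Matrix.smul_apply, det_toeplitzLower] at hcorner
  simp only [toeplitzLower, of_apply, Fin.val_last, Fin.val_zero, Nat.sub_zero, zero_le,
    if_true, zero_add, smul_eq_mul] at hcorner
  rw [mul_assoc, ← hcorner, ← mul_assoc, ← mul_pow, neg_one_mul, neg_neg, one_pow, one_mul]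

theorem coeff_one_add_X_pow (n k : ℕ) : coeff k ((1 + X : R⟦X⟧) ^ n) = n.choose k := by
  rw [← Polynomial.coe_X, ← Polynomial.coe_one, ← Polynomial.coe_add, ← Polynomial.coe_pow,
    Polynomial.coeff_coe, Polynomial.coeff_one_add_X_pow]

theorem one_add_X_pow_mul_rescale_invOneSubPow (n : ℕ) :
    (1 + X : R⟦X⟧) ^ n * rescale (-1) (invOneSubPow R n).val = 1 := by
  have h : (1 - X : R⟦X⟧) ^ n * (invOneSubPow R n).val = 1 := by
    rw [← invOneSubPow_inv_eq_one_sub_pow]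
    exact (invOneSubPow R n).inv_val
  simpa [rescale_neg_one_X] using congrArg (rescale (-1 : R)) h

theorem det_toeplitzLower_one_add_X_pow_submatrix_succ_castSucc (d m : ℕ) :
    ((toeplitzLower ((1 + X : R⟦X⟧) ^ (d + 1)) (m + 1)).submatrix Fin.succ Fin.castSucc).det =
      (d + m).choose d := by
  rw [det_toeplitzLower_submatrix_succ_castSucc (one_add_X_pow_mul_rescale_invOneSubPow _),
    coeff_rescale, invOneSubPow_val_succ_eq_mk_add_choose, coeff_mk]
  simp only [map_pow, map_add, map_one, constantCoeff_X, add_zero, one_pow, mul_one,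
    ← mul_assoc, ← mul_pow, neg_one_mul, neg_neg, one_mul]

end PowerSeries

theorem Nat.cast_choose_eq_prod_mul_inv {K : Type*} [Field K] (N k : ℕ) (hk : (k ! : K) ≠ 0) :
    (N.choose k : K) = ∏ t ∈ Finset.range k, ((N - t : ℕ) : K) * ((1 + t : ℕ) : K)⁻¹ := by
  rw [Finset.prod_mul_distrib, Finset.prod_inv_distrib, ← Nat.cast_prod, ← Nat.cast_prod,
    ← Nat.descFactorial_eq_prod_range, Nat.descFactorial_eq_factorial_mul_choose,
    show ∏ t ∈ Finset.range k, (1 + t) = (k)! by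
      simp_rw [add_comm 1]; exact Finset.prod_range_add_one_eq_factorial k,
    Nat.cast_mul, mul_comm, inv_mul_cancel_left₀ hk]

theorem ch_natCast_sub_add_one (n a b : ℕ) :
    ch n ((a : ℤ) - b + 1) = if b ≤ a + 1 then (n.choose (a + 1 - b) : ℤ) else 0 := by
  unfold ch
  split_ifs <;> first | omega | (congr; omega)

open PowerSeries in
theorem of_ch_sub_add_one_eq_toeplitzLower_submatrix (R : Type*) [CommRing R] (n ℓ : ℕ) :
    (Matrix.of fun i j : Fin ℓ => ((ch n ((i : ℕ) - (j : ℕ) + 1) : ℤ) : R)) =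
      (toeplitzLower ((1 + X : R⟦X⟧) ^ n) (ℓ + 1)).submatrix Fin.succ Fin.castSucc := by
  ext i j
  rw [of_apply, ch_natCast_sub_add_one, submatrix_apply, toeplitzLower, of_apply]
  simp only [Fin.le_def, Fin.val_castSucc, Fin.val_succ, coeff_one_add_X_pow]
  split_ifs <;> simp

theorem M5det_general (p ℓ : ℕ) (hp : p.Prime) (hpl : p = 7 * ℓ + 2) :
    Matrix.det (Matrix.of fun i j : Fin ℓ =>
        ((ch (2 * ℓ + 1) ((i : ℕ) - (j : ℕ) + 1) : ℤ) : ZMod p)) =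
      ∏ t ∈ Finset.range ℓ, (((3 * ℓ - t : ℕ) : ZMod p) * ((1 + t : ℕ) : ZMod p)⁻¹) ∧
    IsUnit (Matrix.det (Matrix.of fun i j : Fin ℓ =>
        ((ch (2 * ℓ + 1) ((i : ℕ) - (j : ℕ) + 1) : ℤ) : ZMod p))) := by
  have := Fact.mk hp
  have hne : ∀ a, 0 < a → a < p → (a : ZMod p) ≠ 0 := fun a h0 hlt => by
    rw [Ne, ZMod.natCast_eq_zero_iff]
    exact Nat.not_dvd_of_pos_of_lt h0 hlt
  have hfact : (ℓ ! : ZMod p) ≠ 0 := by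
    rw [Ne, ZMod.natCast_eq_zero_iff, hp.dvd_factorial]
    omega
  rw [of_ch_sub_add_one_eq_toeplitzLower_submatrix,
    PowerSeries.det_toeplitzLower_one_add_X_pow_submatrix_succ_castSucc, Nat.choose_symm_add,
    show 2 * ℓ + ℓ = 3 * ℓ by ring, Nat.cast_choose_eq_prod_mul_inv _ _ hfact]
  refine ⟨rfl, Ne.isUnit (prod_ne_zero_iff.mpr fun t ht => ?_)⟩
  rw [mem_range] at ht
  exact mul_ne_zero (hne _ (by omega) (by omega)) (inv_ne_zero (hne _ (by omega) (by omega)))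

/-- For p = 7ℓ+2 prime, ℓ ≥ 1, the ℓ×ℓ matrix over ℤ/pℤ with (i,j) entry
C(2ℓ+1, i-j+1) has determinant ∏_{t=0}^{ℓ-1} (3ℓ-t)/(1+t) mod p, and is
invertible mod p. -/
theorem M5det (p ℓ : ℕ) (hl : 1 ≤ ℓ) (hp : p.Prime) (hpl : p = 7 * ℓ + 2) :
    Matrix.det (Matrix.of fun i j : Fin ℓ =>
        ((ch (2 * ℓ + 1) ((i : ℕ) - (j : ℕ) + 1) : ℤ) : ZMod p)) =
      ∏ t ∈ Finset.range ℓ, (((3 * ℓ - t : ℕ) : ZMod p) * ((1 + t : ℕ) : ZMod p)⁻¹) ∧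
    IsUnit (Matrix.det (Matrix.of fun i j : Fin ℓ =>
        ((ch (2 * ℓ + 1) ((i : ℕ) - (j : ℕ) + 1) : ℤ) : ZMod p))) :=
  M5det_general p ℓ hp hpl
end

section
/- Let K be a field of characteristic p where p ≡ 3 (mod 7) is prime. Then in the ring R = K[x,y,z]/(x^7+y^7-z^7), the element x^{3p} y^{3p} belongs to the ideal generated by x^{4p}, y^{4p}, z^{4p}. In particular, x^3 y^3 lies in the Frobenius closure of the ideal (x^4, y^4, z^4). -/
open MvPolynomial in
/-- The ideal (x^7 + y^7 - z^7) in K[x,y,z]. -/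
noncomputable def fermatIdeal (K : Type*) [Field K] : Ideal (MvPolynomial (Fin 3) K) :=
  Ideal.span {(X 0 : MvPolynomial (Fin 3) K) ^ 7 + X 1 ^ 7 - X 2 ^ 7}

/-- The Fermat ring K[x,y,z]/(x^7+y^7-z^7). -/
noncomputable def FermatRing (K : Type*) [Field K] : Type _ :=
  MvPolynomial (Fin 3) K ⧸ fermatIdeal K

noncomputable instance (K : Type*) [Field K] : CommRing (FermatRing K) :=
  Ideal.Quotient.commRing (fermatIdeal K)

open MvPolynomial in
/-- The class of x in the Fermat ring. -/
noncomputable def fx (K : Type*) [Field K] : FermatRing K := Ideal.Quotient.mk _ (X 0)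

open MvPolynomial in
/-- The class of y in the Fermat ring. -/
noncomputable def fy (K : Type*) [Field K] : FermatRing K := Ideal.Quotient.mk _ (X 1)

open MvPolynomial in
/-- The class of z in the Fermat ring. -/
noncomputable def fz (K : Type*) [Field K] : FermatRing K := Ideal.Quotient.mk _ (X 2)

/-!
Write `p = 7k + 3`, `n = 4k + 2`, `a = x⁷`, `b = y⁷`, so that `a + b = z⁷`,
`x^{3p} y^{3p} = x² y² (ab)^{3k+1}` and `7n = 4p + 2`; it therefore suffices that
`(ab)^{3k+1} ∈ (aⁿ, bⁿ, (a + b)ⁿ)` in `K[a, b]`. Dehomogenising, with `d = 2k`, this follows from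
the surjectivity of `(f, g, h) ↦ (X + 1)ⁿ f + Xⁿ g + h` from triples of polynomials of degree
`≤ d` to polynomials of degree `≤ 3d + 2`. Both sides have dimension `3d + 3`, so it is enough to
show injectivity. For a kernel element, the Wronskian `W(Xⁿ g, h) = W((X + 1)ⁿ f, Xⁿ g)` is
divisible by `X^{n-1} (X + 1)^{n-1}` but has degree `< 2n - 2`, so it vanishes. The root
multiplicities of `h` and `(X + 1)ⁿ f` at `-1` are then congruent mod `p`. They differ by a number
in `(0, n + d]`, and `n + d = 6k + 2 < p`.
-/

open Polynomial

namespace Polynomial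

section CommRing

variable {R : Type*} [CommRing R]

theorem mem_degreeLT_add_one_iff {p : R[X]} {n : ℕ} :
    p ∈ degreeLT R (n + 1) ↔ p.natDegree ≤ n := by
  rw [degreeLT_succ_eq_degreeLE, mem_degreeLE, natDegree_le_iff_degree_le]

theorem pow_sub_one_dvd_wronskian_left {q a : R[X]} {n : ℕ} (h : q ^ n ∣ a) (b : R[X]) :
    q ^ (n - 1) ∣ wronskian a b :=
  dvd_sub (((pow_dvd_pow q (n.sub_le 1)).trans h).mul_right _)
    ((pow_sub_one_dvd_derivative_of_pow_dvd h).mul_right _)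

theorem pow_sub_one_dvd_wronskian_right {q b : R[X]} {n : ℕ} (h : q ^ n ∣ b) (a : R[X]) :
    q ^ (n - 1) ∣ wronskian a b := by
  rw [← wronskian_neg_eq, dvd_neg]
  exact pow_sub_one_dvd_wronskian_left h a

theorem X_sub_C_mul_wronskian_X_sub_C_pow_mul (t : R) (a c : ℕ) (f g : R[X]) :
    (X - C t) * wronskian ((X - C t) ^ a * f) ((X - C t) ^ c * g) =
      (X - C t) ^ (a + c) * ((C (c : R) - C (a : R)) * f * g + (X - C t) * wronskian f g) := by
  have hd : ∀ m : ℕ, (X - C t) * derivative ((X - C t) ^ m) = C (m : R) * (X - C t) ^ m := by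
    rintro (_ | m)
    · simp
    · rw [derivative_X_sub_C_pow, Nat.add_sub_cancel]
      ring
  simp only [wronskian, derivative_mul]
  linear_combination ((X - C t) ^ a * f * g) * hd c - ((X - C t) ^ c * f * g) * hd a

end CommRing

section IsDomain

variable {R : Type*} [CommRing R] [IsDomain R]

theorem rootMultiplicity_le_natDegree (p : R[X]) (t : R) :
    rootMultiplicity t p ≤ p.natDegree := by
  classical
  rw [← count_roots]
  exact (Multiset.count_le_card _ _).trans (card_roots' p)

theorem cast_rootMultiplicity_eq_of_wronskian_eq_zero {f g : R[X]} (hf : f ≠ 0) (hg : g ≠ 0)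
    (hW : wronskian f g = 0) (t : R) :
    (rootMultiplicity t f : R) = rootMultiplicity t g := by
  obtain ⟨f₀, hf₀, hf₀t⟩ := f.exists_eq_pow_rootMultiplicity_mul_and_not_dvd hf t
  obtain ⟨g₀, hg₀, hg₀t⟩ := g.exists_eq_pow_rootMultiplicity_mul_and_not_dvd hg t
  have key := X_sub_C_mul_wronskian_X_sub_C_pow_mul t (rootMultiplicity t f)
    (rootMultiplicity t g) f₀ g₀
  rw [← hf₀, ← hg₀, hW, mul_zero, eq_comm, mul_eq_zero] at key
  have heval := congrArg (eval t) (key.resolve_left (pow_ne_zero _ (X_sub_C_ne_zero t)))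
  rw [dvd_iff_isRoot, IsRoot.def] at hf₀t hg₀t
  simp only [eval_add, eval_mul, eval_sub, eval_C, eval_X, sub_self, zero_mul, add_zero,
    eval_zero, mul_eq_zero, hf₀t, hg₀t, or_false, sub_eq_zero] at heval
  exact heval.symm

theorem wronskian_ne_zero_of_pow_dvd {N n : ℕ} (hR : ∀ m : ℕ, 0 < m → m ≤ N → (m : R) ≠ 0)
    {f g : R[X]} {t : R} (hf : f ≠ 0) (hfN : f.natDegree ≤ N) (hft : (X - C t) ^ n ∣ f)
    (hg : g ≠ 0) (hgn : g.natDegree < n) : wronskian f g ≠ 0 := by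
  intro hW
  have hfg := cast_rootMultiplicity_eq_of_wronskian_eq_zero hf hg hW t
  have hnf : n ≤ rootMultiplicity t f := (le_rootMultiplicity_iff hf).2 hft
  have hfN' := (rootMultiplicity_le_natDegree f t).trans hfN
  have hgn' := (rootMultiplicity_le_natDegree g t).trans_lt hgn
  refine hR (rootMultiplicity t f - rootMultiplicity t g) (by omega) (by omega) ?_
  rw [Nat.cast_sub (by omega), hfg, sub_self]

theorem eq_zero_of_X_add_one_pow_mul_add_X_pow_mul_add_eq_zero {d n : ℕ} (hn : 2 * d + 2 ≤ n)
    (hR : ∀ m : ℕ, 0 < m → m ≤ n + d → (m : R) ≠ 0) {f g h : R[X]} (hf : f.natDegree ≤ d)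
    (hg : g.natDegree ≤ d) (hh : h.natDegree ≤ d) (hsum : (X + 1) ^ n * f + X ^ n * g + h = 0) :
    f = 0 := by
  have hX1 : (X + 1 : R[X]) = X - C (-1) := by rw [map_neg, C_1, sub_neg_eq_add]
  have hcop : IsCoprime (X : R[X]) (X + 1) := ⟨-1, 1, by ring⟩
  have hXg : (X ^ n * g).natDegree ≤ n + d :=
    natDegree_mul_le.trans (by rw [natDegree_X_pow]; omega)
  have hW : wronskian (X ^ n * g) h = 0 := by
    by_contra hW
    have hdvd : X ^ (n - 1) * (X + 1) ^ (n - 1) ∣ wronskian (X ^ n * g) h := by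
      rw [← wronskian_eq_of_sum_zero hsum]
      exact hcop.pow.mul_dvd (pow_sub_one_dvd_wronskian_right (dvd_mul_right _ _) _)
        (pow_sub_one_dvd_wronskian_left (dvd_mul_right _ _) _)
    have hlow := natDegree_le_of_dvd hdvd hW
    rw [hX1, natDegree_mul (pow_ne_zero _ X_ne_zero) (pow_ne_zero _ (X_sub_C_ne_zero _)),
      natDegree_X_pow, natDegree_pow, natDegree_X_sub_C] at hlow
    have hup := natDegree_wronskian_lt_add hW
    omega
  by_contra hf0
  rcases eq_or_ne h 0 with rfl | hh0
  · have hXf : X ^ n ∣ f := hcop.pow.dvd_of_dvd_mul_left ⟨-g, by linear_combination hsum⟩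
    have := natDegree_le_of_dvd hXf hf0
    rw [natDegree_X_pow] at this
    omega
  · refine wronskian_ne_zero_of_pow_dvd hR (t := -1) (n := n)
      (mul_ne_zero (pow_ne_zero _ (hX1 ▸ X_sub_C_ne_zero _)) hf0) ?_
      (by rw [← hX1]; exact dvd_mul_right _ _) hh0 (by omega) ?_
    · refine natDegree_mul_le.trans ?_
      rw [hX1, natDegree_pow, natDegree_X_sub_C]
      omega
    · rw [← wronskian_neg_eq, neg_eq_zero, ← wronskian_eq_of_sum_zero
        (by linear_combination hsum : X ^ n * g + h + (X + 1) ^ n * f = 0)]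
      exact hW

theorem X_add_one_pow_mul_add_X_pow_mul_add_eq_zero_iff {d n : ℕ} (hn : 2 * d + 2 ≤ n)
    (hR : ∀ m : ℕ, 0 < m → m ≤ n + d → (m : R) ≠ 0) {f g h : R[X]} (hf : f.natDegree ≤ d)
    (hg : g.natDegree ≤ d) (hh : h.natDegree ≤ d) :
    (X + 1) ^ n * f + X ^ n * g + h = 0 ↔ f = 0 ∧ g = 0 ∧ h = 0 := by
  refine ⟨fun hsum => ?_, by rintro ⟨rfl, rfl, rfl⟩; ring⟩
  obtain rfl := eq_zero_of_X_add_one_pow_mul_add_X_pow_mul_add_eq_zero hn hR hf hg hh hsum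
  have hXg : X ^ n * g = -h := by linear_combination hsum
  obtain rfl : g = 0 := by
    by_contra hg0
    have := natDegree_mul (pow_ne_zero n (X_ne_zero (R := R))) hg0
    rw [natDegree_X_pow, hXg, natDegree_neg] at this
    omega
  exact ⟨rfl, rfl, by simpa using hXg.symm⟩

end IsDomain

theorem finrank_degreeLT (K : Type*) [Field K] (n : ℕ) :
    Module.finrank K (degreeLT K n) = n := by
  rw [(degreeLTEquiv K n).finrank_eq, Module.finrank_fin_fun]

theorem exists_X_add_one_pow_mul_add_X_pow_mul_add_eq {K : Type*} [Field K] {d : ℕ}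
    (hK : ∀ m : ℕ, 0 < m → m ≤ 3 * d + 2 → (m : K) ≠ 0) {q : K[X]}
    (hq : q.natDegree ≤ 3 * d + 2) :
    ∃ f g h : K[X], f.natDegree ≤ d ∧ g.natDegree ≤ d ∧ h.natDegree ≤ d ∧
      (X + 1) ^ (2 * d + 2) * f + X ^ (2 * d + 2) * g + h = q := by
  let P := degreeLT K (d + 1)
  let Φ : P × P × P →ₗ[K] K[X] :=
    (LinearMap.mulLeft K ((X + 1) ^ (2 * d + 2)) ∘ₗ P.subtype).coprod
      ((LinearMap.mulLeft K (X ^ (2 * d + 2)) ∘ₗ P.subtype).coprod P.subtype)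
  have hΦ (x : P × P × P) : Φ x = (X + 1) ^ (2 * d + 2) * (x.1 : K[X]) +
      X ^ (2 * d + 2) * (x.2.1 : K[X]) + (x.2.2 : K[X]) := by
    simp [Φ, add_assoc]
  have hinj : Function.Injective Φ := by
    rw [← LinearMap.ker_eq_bot, LinearMap.ker_eq_bot']
    rintro ⟨⟨f, hf⟩, ⟨g, hg⟩, ⟨h, hh⟩⟩ hsum
    rw [hΦ] at hsum
    rw [mem_degreeLT_add_one_iff] at hf hg hh
    obtain ⟨rfl, rfl, rfl⟩ := (X_add_one_pow_mul_add_X_pow_mul_add_eq_zero_iff le_rfl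
      (fun m hm hmd => hK m hm (by omega)) hf hg hh).1 hsum
    rfl
  have hrange : LinearMap.range Φ = degreeLT K (3 * d + 2 + 1) := by
    have := (degreeLTEquiv K (3 * d + 2 + 1)).symm.finiteDimensional
    refine Submodule.eq_of_le_of_finrank_eq ?_ ?_
    · rintro _ ⟨⟨⟨f, hf⟩, ⟨g, hg⟩, ⟨h, hh⟩⟩, rfl⟩
      rw [mem_degreeLT_add_one_iff] at hf hg hh ⊢
      rw [hΦ]
      compute_degree
      all_goals omega
    · rw [LinearMap.finrank_range_of_inj hinj, Module.finrank_prod, Module.finrank_prod,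
        finrank_degreeLT, finrank_degreeLT]
      ring
  have hqΦ : q ∈ LinearMap.range Φ := by
    rw [hrange]
    exact mem_degreeLT_add_one_iff.2 hq
  obtain ⟨x, hx⟩ := hqΦ
  exact ⟨x.1, x.2.1, x.2.2, mem_degreeLT_add_one_iff.1 x.1.2, mem_degreeLT_add_one_iff.1 x.2.1.2,
    mem_degreeLT_add_one_iff.1 x.2.2.2, (hΦ x).symm.trans hx⟩

end Polynomial

open MvPolynomial in
theorem pow_mul_pow_mem_span_pow_add {K S : Type*} [Field K] [CommRing S] [Algebra K S]
    {d i j : ℕ} (hK : ∀ m : ℕ, 0 < m → m ≤ 3 * d + 2 → (m : K) ≠ 0) (hij : i + j = 3 * d + 2)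
    (a b : S) :
    a ^ i * b ^ j ∈ Ideal.span {a ^ (2 * d + 2), b ^ (2 * d + 2), (a + b) ^ (2 * d + 2)} := by
  obtain ⟨f, g, h, hf, hg, hh, hq⟩ := Polynomial.exists_X_add_one_pow_mul_add_X_pow_mul_add_eq hK
    ((Polynomial.natDegree_X_pow_le i).trans (by omega) : (Polynomial.X ^ i : K[X]).natDegree ≤ _)
  have hhom : (X 0 : MvPolynomial (Fin 2) K) ^ i * X 1 ^ j =
      (X 0 + X 1) ^ (2 * d + 2) * f.homogenize d + X 0 ^ (2 * d + 2) * g.homogenize d +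
        X 1 ^ (2 * d + 2) * h.homogenize d := by
    rw [show j = 3 * d + 2 - i by omega, ← Polynomial.homogenize_X_pow (by omega)]
    apply Polynomial.homogenize_eq_of_isHomogeneous
    · have hpow :
          ((X 0 + X 1) ^ (2 * d + 2) : MvPolynomial (Fin 2) K).IsHomogeneous (2 * d + 2) := by
        simpa using ((isHomogeneous_X K 0).add (isHomogeneous_X K 1)).pow (2 * d + 2)
      rw [show 3 * d + 2 = 2 * d + 2 + d by omega]
      exact ((hpow.mul f.isHomogeneous_homogenize).add
        ((isHomogeneous_X_pow 0 _).mul g.isHomogeneous_homogenize)).add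
        ((isHomogeneous_X_pow 1 _).mul h.isHomogeneous_homogenize)
    · simp [hf, hg, hh, ← hq]
  have hab := congrArg (MvPolynomial.aeval ![a, b]) hhom
  simp only [map_add, map_mul, map_pow, MvPolynomial.aeval_X, Matrix.cons_val_zero,
    Matrix.cons_val_one, Matrix.cons_val_fin_one] at hab
  rw [hab]
  refine add_mem (add_mem ?_ ?_) ?_ <;> exact Ideal.mul_mem_right _ _ (Ideal.subset_span (by simp))

theorem Ideal.span_pow_le_span_pow {S : Type*} [CommSemiring S] (a b c : S) {l m : ℕ}
    (h : l ≤ m) :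
    Ideal.span {a ^ m, b ^ m, c ^ m} ≤ Ideal.span {a ^ l, b ^ l, c ^ l} := by
  rw [Ideal.span_le]
  rintro _ (rfl | rfl | rfl) <;>
    exact Ideal.mem_of_dvd _ (pow_dvd_pow _ h) (Ideal.subset_span (by simp))

theorem fx_pow_seven_add_fy_pow_seven (K : Type*) [Field K] :
    fx K ^ 7 + fy K ^ 7 = fz K ^ 7 := by
  rw [← sub_eq_zero]
  exact Ideal.Quotient.eq_zero_iff_mem.2 (Ideal.subset_span rfl)

theorem frobeniusClosure_3mod7_general {K : Type*} [Field K] (p : ℕ)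
    (h7 : p % 7 = 3) [CharP K p] :
    fx K ^ (3 * p) * fy K ^ (3 * p) ∈
        Ideal.span {fx K ^ (4 * p), fy K ^ (4 * p), fz K ^ (4 * p)} ∧
      ∃ e : ℕ, (fx K ^ 3 * fy K ^ 3) ^ p ^ e ∈
        Ideal.span {(fx K ^ 4) ^ p ^ e, (fy K ^ 4) ^ p ^ e, (fz K ^ 4) ^ p ^ e} := by
  obtain ⟨k, rfl⟩ : ∃ k, p = 7 * k + 3 := ⟨p / 7, by omega⟩
  have : Algebra K (FermatRing K) := Ideal.Quotient.algebra K
  have hK : ∀ m : ℕ, 0 < m → m ≤ 3 * (2 * k) + 2 → (m : K) ≠ 0 := fun m hm hmk hm0 =>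
    absurd (Nat.le_of_dvd hm ((CharP.cast_eq_zero_iff K (7 * k + 3) m).1 hm0)) (by omega)
  have hmem := pow_mul_pow_mem_span_pow_add hK (i := 3 * k + 1) (j := 3 * k + 1) (by ring)
    (fx K ^ 7) (fy K ^ 7)
  rw [fx_pow_seven_add_fy_pow_seven] at hmem
  simp only [← pow_mul] at hmem
  have main : fx K ^ (3 * (7 * k + 3)) * fy K ^ (3 * (7 * k + 3)) ∈
      Ideal.span {fx K ^ (4 * (7 * k + 3)), fy K ^ (4 * (7 * k + 3)),
        fz K ^ (4 * (7 * k + 3))} := by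
    have hsplit : fx K ^ (3 * (7 * k + 3)) * fy K ^ (3 * (7 * k + 3)) =
        fx K ^ 2 * fy K ^ 2 * (fx K ^ (7 * (3 * k + 1)) * fy K ^ (7 * (3 * k + 1))) := by ring
    rw [hsplit]
    exact Ideal.mul_mem_left _ _ (Ideal.span_pow_le_span_pow _ _ _ (by omega) hmem)
  refine ⟨main, 1, ?_⟩
  simpa only [pow_one, mul_pow, ← pow_mul, mul_comm] using main

/-- For p ≡ 3 (mod 7) prime and char K = p, in R = K[x,y,z]/(x^7+y^7-z^7) one has
x^{3p} y^{3p} ∈ (x^{4p}, y^{4p}, z^{4p}); in particular x³y³ lies in the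
Frobenius closure of (x⁴, y⁴, z⁴). -/
theorem frobeniusClosure_3mod7 {K : Type*} [Field K] (p : ℕ) (hp : p.Prime)
    (h7 : p % 7 = 3) [CharP K p] :
    fx K ^ (3 * p) * fy K ^ (3 * p) ∈
        Ideal.span {fx K ^ (4 * p), fy K ^ (4 * p), fz K ^ (4 * p)} ∧
      ∃ e : ℕ, (fx K ^ 3 * fy K ^ 3) ^ p ^ e ∈
        Ideal.span {(fx K ^ 4) ^ p ^ e, (fy K ^ 4) ^ p ^ e, (fz K ^ 4) ^ p ^ e} :=
  frobeniusClosure_3mod7_general p h7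
end

section
/- Let K be a field of characteristic 2 and R = K[x,y,z]/(x^7+y^7-z^7). Then x^{3·2⁷} y^{3·2⁷} ∉ (x^{4·2⁷}, y^{4·2⁷}, z^{4·2⁷}) in R, i.e., x^{384} y^{384} ∉ (x^{512}, y^{512}, z^{512}). -/
open MvPolynomial

namespace MvPolynomial

variable {σ R : Type*} [CommSemiring R]

noncomputable def stride (n : ℕ) [NeZero n] (e : σ →₀ ℕ) :
    MvPolynomial σ R →ₗ[R] MvPolynomial σ R :=
  (AddMonoidAlgebra.coeffLinearEquiv R).symm.toLinearMap ∘ₗ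
    Finsupp.lcomapDomain (fun m => n • m + e)
      ((add_left_injective e).comp (smul_right_injective _ (NeZero.ne n))) ∘ₗ
      (AddMonoidAlgebra.coeffLinearEquiv R).toLinearMap

variable {n : ℕ} [NeZero n] {e : σ →₀ ℕ}

@[simp]
theorem coeff_stride (m : σ →₀ ℕ) (p : MvPolynomial σ R) :
    coeff m (stride n e p) = coeff (n • m + e) p := rfl

theorem stride_monomial_mul (he : ∀ i, e i < n) (s : σ →₀ ℕ) (a : R) (p : MvPolynomial σ R) :
    stride n e (monomial (n • s) a * p) = monomial s a * stride n e p := by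
  ext m
  have hle : n • s ≤ n • m + e ↔ s ≤ m := by
    simp only [Finsupp.le_def, Finsupp.coe_add, Finsupp.coe_smul, Pi.add_apply, Pi.smul_apply,
      smul_eq_mul]
    refine forall_congr' fun i => ⟨fun h => ?_, fun h => le_add_right (Nat.mul_le_mul_left n h)⟩
    by_contra! hlt
    have := Nat.mul_le_mul_left n (Nat.succ_le_of_lt hlt)
    rw [Nat.mul_succ] at this
    linarith [he i]
  rw [coeff_stride, coeff_monomial_mul', coeff_monomial_mul']
  by_cases h : s ≤ m
  · rw [if_pos (hle.mpr h), if_pos h, coeff_stride]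
    congr 2
    ext i
    simp only [Finsupp.coe_tsub, Finsupp.coe_add, Finsupp.coe_smul, Pi.sub_apply, Pi.add_apply,
      Pi.smul_apply, smul_eq_mul, Nat.mul_sub]
    have := Nat.mul_le_mul_left n (h i)
    omega
  · rw [if_neg (mt hle.mp h), if_neg h]

theorem stride_expand_mul (he : ∀ i, e i < n) (g p : MvPolynomial σ R) :
    stride n e (expand n g * p) = g * stride n e p := by
  induction g using MvPolynomial.induction_on' with
  | monomial s a => rw [expand_monomial, stride_monomial_mul he]
  | add g g' hg hg' => rw [map_add, add_mul, map_add, hg, hg', add_mul]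

theorem stride_monomial_self (a : R) : stride n e (monomial e a) = C a := by
  classical
  ext m
  rw [coeff_stride, coeff_monomial, coeff_C]
  simp only [eq_comm (a := e), eq_comm (a := (0 : σ →₀ ℕ)), add_eq_right, smul_eq_zero,
    NeZero.ne n, false_or]

theorem stride_mem_span_of_mem_span_expand {S : Set (MvPolynomial σ R)} (he : ∀ i, e i < n)
    {p : MvPolynomial σ R} (hp : p ∈ Ideal.span (expand n '' S)) :
    stride n e p ∈ Ideal.span S := by
  -- `stride` is linear only over the image of `expand n`, so induct on the claim for every `q * p`.
  suffices ∀ q, stride n e (q * p) ∈ Ideal.span S by simpa using this 1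
  induction hp using Submodule.span_induction with
  | mem _ hx =>
    obtain ⟨g, hg, rfl⟩ := hx
    intro q
    rw [mul_comm, stride_expand_mul he]
    exact Ideal.mul_mem_right _ _ (Ideal.subset_span hg)
  | zero => simp
  | add x y _ _ hx hy => intro q; rw [mul_add, map_add]; exact add_mem (hx q) (hy q)
  | smul r x _ hx => intro q; rw [smul_eq_mul, ← mul_assoc]; exact hx _

end MvPolynomial

section Substitution

variable {K : Type*} [CommRing K]

theorem X_pow_mul_X_pow_notMem_span [Nontrivial K] {a b : ℕ} :
    (X 1 ^ a * X 2 ^ b : MvPolynomial (Fin 3) K) ∉ Ideal.span {X 1 ^ (a + 1), X 2 ^ (b + 1)} := by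
  simp only [X_pow_eq_monomial, monomial_mul, one_mul]
  rw [show ({monomial (Finsupp.single 1 (a + 1)) 1, monomial (Finsupp.single 2 (b + 1)) 1} :
      Set (MvPolynomial (Fin 3) K)) = (fun s => monomial s 1) ''
        {Finsupp.single 1 (a + 1), Finsupp.single 2 (b + 1)} by
    simp [Set.image_insert_eq], mem_ideal_span_monomial_image]
  intro h
  obtain ⟨s, hs, hle⟩ := h (Finsupp.single 1 a + Finsupp.single 2 b) (by simp [mem_support_iff])
  rcases hs with rfl | rfl
  · simpa using hle 1
  · simpa using hle 2

theorem X_pow_mul_sub_pow_notMem_span [Nontrivial K] (a : ℕ) :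
    (X 1 ^ a * (X 2 - X 1) ^ a : MvPolynomial (Fin 3) K) ∉
      Ideal.span {X 1 ^ (a + 1), X 2 ^ (a + 1)} := by
  intro h
  obtain ⟨q, hq⟩ : (X 1 : MvPolynomial (Fin 3) K) ∣ (X 2 - X 1) ^ a - X 2 ^ a := by
    have := sub_dvd_pow_sub_pow (X 2 - X 1 : MvPolynomial (Fin 3) K) (X 2) a
    rwa [sub_sub_cancel_left, neg_dvd] at this
  have hdiff : X 1 ^ a * ((X 2 - X 1) ^ a - X 2 ^ a) ∈
      Ideal.span {(X 1 ^ (a + 1) : MvPolynomial (Fin 3) K), X 2 ^ (a + 1)} := by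
    rw [hq, ← mul_assoc, ← pow_succ]
    exact Ideal.mul_mem_right _ _ (Ideal.subset_span (by simp))
  exact X_pow_mul_X_pow_notMem_span (by simpa [mul_sub] using sub_mem h hdiff)

variable [CharP K 2]

theorem sub_pow_mem_span_X_pow :
    ((X 2 - X 1) ^ 73 : MvPolynomial (Fin 3) K) ∈ Ideal.span {X 1 ^ 55, X 2 ^ 55} := by
  have hfrob : ((X 2 - X 1) ^ 73 : MvPolynomial (Fin 3) K)
      = (X 2 ^ 55 * X 2 ^ 9 - X 1 ^ 55 * X 1 ^ 9) * (X 2 - X 1) ^ 9 := by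
    rw [← pow_add, ← pow_add, show 55 + 9 = 2 ^ 6 by rfl, ← sub_pow_char_pow, ← pow_add]
    norm_num
  rw [hfrob]
  refine Ideal.mul_mem_right _ _ (sub_mem ?_ ?_) <;>
    exact Ideal.mul_mem_right _ _ (Ideal.subset_span (by simp))

theorem X_pow_mul_X_pow_notMem_span_fermat_char_two :
    (X 0 ^ 54 * X 1 ^ 54 : MvPolynomial (Fin 3) K) ∉
      Ideal.span {X 0 ^ 73, X 1 ^ 73, X 2 ^ 73, X 0 + X 1 - X 2} := by
  intro h
  have : Nontrivial K := CharP.nontrivial_of_char_ne_one (v := 2) (by norm_num)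
  let φ : MvPolynomial (Fin 3) K →ₐ[K] MvPolynomial (Fin 3) K := aeval ![X 2 - X 1, X 1, X 2]
  have hφ : Ideal.span (φ '' {X 0 ^ 73, X 1 ^ 73, X 2 ^ 73, X 0 + X 1 - X 2}) ≤
      Ideal.span {X 1 ^ 55, X 2 ^ 55} := by
    simp only [Ideal.span_le, Set.image_insert_eq, Set.image_singleton, Set.insert_subset_iff,
      Set.singleton_subset_iff]
    refine ⟨by simpa [φ] using sub_pow_mem_span_X_pow, ?_, ?_, by simp [φ]⟩
    all_goals
      simp only [φ, map_pow, aeval_X]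
      rw [show 73 = 55 + 18 by rfl, pow_add]
      exact Ideal.mul_mem_right _ _ (Ideal.subset_span (by simp))
  have := hφ (Ideal.map_span φ _ ▸ Ideal.mem_map_of_mem φ h)
  exact X_pow_mul_sub_pow_notMem_span 54 (by simpa [φ, mul_comm] using this)

end Substitution

theorem span_X_pow_sup_fermatIdeal_le (K : Type*) [Field K] :
    Ideal.span {X 0 ^ 512, X 1 ^ 512, X 2 ^ 512} ⊔ fermatIdeal K ≤
      Ideal.span (expand 7 '' {X 0 ^ 73, X 1 ^ 73, X 2 ^ 73, X 0 + X 1 - X 2}) := by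
  have hX : ∀ i, (X i ^ 512 : MvPolynomial (Fin 3) K) = X i * expand 7 (X i ^ 73) := by
    intro i
    rw [map_pow, expand_X, ← pow_mul, ← pow_succ']
  refine sup_le (Ideal.span_le.mpr ?_) (Ideal.span_le.mpr ?_)
  · simp only [Set.insert_subset_iff, Set.singleton_subset_iff, SetLike.mem_coe, hX]
    refine ⟨?_, ?_, ?_⟩ <;> exact Ideal.mul_mem_left _ _ (Ideal.subset_span ⟨_, by simp, rfl⟩)
  · rw [Set.singleton_subset_iff]
    exact Ideal.subset_span ⟨X 0 + X 1 - X 2, by simp, by simp⟩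

/-- For char K = 2, in R = K[x,y,z]/(x^7+y^7-z^7) one has
x^{384} y^{384} ∉ (x^{512}, y^{512}, z^{512}). -/
theorem nonmembership_char_two {K : Type*} [Field K] [CharP K 2] :
    fx K ^ 384 * fy K ^ 384 ∉
      Ideal.span {fx K ^ 512, fy K ^ 512, fz K ^ 512} := by
  intro h
  have hlift : (X 0 ^ 384 * X 1 ^ 384 : MvPolynomial (Fin 3) K) ∈
      Ideal.span {X 0 ^ 512, X 1 ^ 512, X 2 ^ 512} ⊔ fermatIdeal K := by
    rw [← Ideal.mem_quotient_iff_mem_sup, Ideal.map_span]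
    simp only [Set.image_insert_eq, Set.image_singleton, map_mul, map_pow]
    exact h
  let e : Fin 3 →₀ ℕ := Finsupp.single 0 6 + Finsupp.single 1 6
  have he : ∀ i, e i < 7 := by
    intro i
    fin_cases i <;> simp [e]
  have htarget : (X 0 ^ 384 * X 1 ^ 384 : MvPolynomial (Fin 3) K) =
      expand 7 (X 0 ^ 54 * X 1 ^ 54) * monomial e 1 := by
    rw [show monomial e (1 : K) = X 0 ^ 6 * X 1 ^ 6 by simp [e, X_pow_eq_monomial, monomial_mul],
      map_mul, map_pow, map_pow, expand_X, expand_X]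
    ring
  have hstride := stride_mem_span_of_mem_span_expand he (span_X_pow_sup_fermatIdeal_le K hlift)
  rw [htarget, stride_expand_mul he, stride_monomial_self, C_1, mul_one] at hstride
  exact X_pow_mul_X_pow_notMem_span_fermat_char_two hstride
end

section
/- Let K be a field of characteristic p = 7ℓ+2 with ℓ ≥ 1. Grade K[x,y] by ℤ/7 ⊕ ℤ/7 ⊕ ℤ with deg x = (1̄, 0̄, 1) and deg y = (0̄, 1̄, 1). If x^{21ℓ+6} y^{21ℓ+6} ∈ (x^{28ℓ+8}, y^{28ℓ+8}, (x^7+y^7)^{4ℓ+1}), then there exist a₀,...,a_{2ℓ-1} ∈ K with x^{21ℓ+6} y^{21ℓ+6} ≡ (Σ_{i=0}^{2ℓ-1} a_i x^{7i+6} y^{7(2ℓ-1-i)+6})·(x^7+y^7)^{4ℓ+1} modulo (x^{28ℓ+8}, y^{28ℓ+8}). -/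
/-!
Grade `K[x,y]` by `ℤ/7 ⊕ ℤ/7 ⊕ ℕ` with `deg x = (1̄,0̄,1)` and `deg y = (0̄,1̄,1)`. The ideal
`(x^{28ℓ+8}, y^{28ℓ+8})` is monomial, hence homogeneous, and `F = (x^7+y^7)^{4ℓ+1}` is homogeneous
of degree `(0̄,0̄,28ℓ+7)`. Taking the component of degree `(6̄,6̄,42ℓ+12)` of a relation
`x^{21ℓ+6} y^{21ℓ+6} = r + q F` replaces `q` by its component of degree `(6̄,6̄,14ℓ+5)`, whose
monomials are exactly the `x^{7i+6} y^{7(2ℓ-1-i)+6}` with `i < 2ℓ`.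
-/

open MvPolynomial

theorem Ideal.exists_add_mul_of_mem_span_triple {R : Type*} [CommSemiring R] {a b c f : R}
    (h : f ∈ Ideal.span {a, b, c}) : ∃ r ∈ Ideal.span {a, b}, ∃ q, f = r + q * c := by
  rw [Ideal.span_insert, Ideal.span_insert, ← sup_assoc, ← Ideal.span_insert,
    Submodule.mem_sup] at h
  obtain ⟨r, hr, z, hz, rfl⟩ := h
  obtain ⟨q, rfl⟩ := Ideal.mem_span_singleton'.mp hz
  exact ⟨r, hr, q, rfl⟩

namespace MvPolynomial

variable {σ R M : Type*} [CommSemiring R]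

theorem C_mul_X_pow_mul_X_pow (c : R) (i j : σ) (a b : ℕ) :
    C c * X i ^ a * X j ^ b = monomial (Finsupp.single i a + Finsupp.single j b) c := by
  rw [C_mul_X_pow_eq_monomial, X_pow_eq_monomial, monomial_mul, mul_one]

section

variable [AddCommMonoid M] {w : σ → M} {n : M}

theorem IsWeightedHomogeneous.eq_sum_monomial {φ : MvPolynomial σ R}
    (hφ : IsWeightedHomogeneous w φ n) {ι : Type*} [Fintype ι] {e : ι → σ →₀ ℕ}
    (he : Function.Injective e) (hsurj : ∀ d, Finsupp.weight w d = n → ∃ i, e i = d) :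
    φ = ∑ i, monomial (e i) (coeff (e i) φ) := by
  classical
  ext d
  simp only [coeff_sum, coeff_monomial]
  by_cases hd : coeff d φ = 0
  · rw [hd, Finset.sum_eq_zero]
    rintro i -
    split_ifs with hi <;> simp [hi, hd]
  · obtain ⟨j, rfl⟩ := hsurj d (hφ hd)
    rw [Finset.sum_eq_single j (fun i _ hi => if_neg (he.ne hi)) (by simp), if_pos rfl]

theorem isHomogeneous_span_X_pow_pair [DecidableEq M] (w : σ → M) (i j : σ) (a b : ℕ) :
    letI := weightedGradedAlgebra R w
    (Ideal.span {X i ^ a, X j ^ b}).IsHomogeneous (weightedHomogeneousSubmodule R w) := by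
  let := weightedGradedAlgebra R w
  apply Ideal.homogeneous_span
  rintro x (rfl | rfl)
  · exact ⟨_, (isWeightedHomogeneous_X R w i).pow a⟩
  · exact ⟨_, (isWeightedHomogeneous_X R w j).pow b⟩

end

theorem weightedHomogeneousComponent_mul_of_isWeightedHomogeneous [AddCancelCommMonoid M]
    {w : σ → M} {m : M} {ψ : MvPolynomial σ R} (hψ : IsWeightedHomogeneous w ψ m)
    (n : M) (φ : MvPolynomial σ R) :
    weightedHomogeneousComponent w (n + m) (φ * ψ) = weightedHomogeneousComponent w n φ * ψ := by
  classical
  let := weightedGradedAlgebra R w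
  rw [← weightedDecomposition.decompose'_apply, ← weightedDecomposition.decompose'_apply]
  exact DirectSum.coe_decompose_mul_add_of_right_mem _ hψ

end MvPolynomial

def multigrading : Fin 2 → ZMod 7 × ZMod 7 × ℕ := ![(1, 0, 1), (0, 1, 1)]

theorem weight_multigrading (d : Fin 2 →₀ ℕ) :
    Finsupp.weight multigrading d = ((d 0 : ZMod 7), (d 1 : ZMod 7), d 0 + d 1) := by
  simp [Finsupp.weight_apply, Finsupp.sum_fintype, multigrading, Prod.ext_iff]

noncomputable def cofactorExponent (ℓ i : ℕ) : Fin 2 →₀ ℕ :=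
  Finsupp.single 0 (7 * i + 6) + Finsupp.single 1 (7 * (2 * ℓ - 1 - i) + 6)

theorem cofactorExponent_injective (ℓ : ℕ) :
    Function.Injective fun i : Fin (2 * ℓ) => cofactorExponent ℓ i := by
  intro i j hij
  have := congr($hij 0)
  simp [cofactorExponent] at this
  omega

theorem exists_cofactorExponent_eq {ℓ : ℕ} {d : Fin 2 →₀ ℕ}
    (hd : Finsupp.weight multigrading d = (6, 6, 14 * ℓ + 5)) :
    ∃ i : Fin (2 * ℓ), cofactorExponent ℓ i = d := by
  simp only [weight_multigrading, Prod.mk.injEq] at hd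
  obtain ⟨h0, h1, hsum⟩ := hd
  have h0 : d 0 % 7 = 6 := by simpa using (ZMod.natCast_eq_natCast_iff' (d 0) 6 7).mp h0
  have h1 : d 1 % 7 = 6 := by simpa using (ZMod.natCast_eq_natCast_iff' (d 1) 6 7).mp h1
  refine ⟨⟨d 0 / 7, by omega⟩, ?_⟩
  ext j
  fin_cases j <;> simp [cofactorExponent] <;> omega

theorem isWeightedHomogeneous_X_pow_seven_add_pow (K : Type*) [CommSemiring K] (k : ℕ) :
    IsWeightedHomogeneous multigrading ((X 0 ^ 7 + X 1 ^ 7 : MvPolynomial (Fin 2) K) ^ k)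
      (k • (0, 0, 7)) := by
  have h7 : ∀ i, (7 • multigrading i : ZMod 7 × ZMod 7 × ℕ) = (0, 0, 7) := by
    intro i; fin_cases i <;> decide
  refine IsWeightedHomogeneous.pow ?_ k
  exact (h7 0 ▸ (isWeightedHomogeneous_X K multigrading 0).pow 7).add
    (h7 1 ▸ (isWeightedHomogeneous_X K multigrading 1).pow 7)

theorem isWeightedHomogeneous_X_pow_mul_X_pow (K : Type*) [CommSemiring K] (a b : ℕ) :
    IsWeightedHomogeneous multigrading (X 0 ^ a * X 1 ^ b : MvPolynomial (Fin 2) K)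
      ((a : ZMod 7), (b : ZMod 7), a + b) := by
  convert ((isWeightedHomogeneous_X K multigrading 0).pow a).mul
    ((isWeightedHomogeneous_X K multigrading 1).pow b) using 1
  simp [multigrading]

theorem eq_sum_cofactorExponent_monomial {K : Type*} [CommSemiring K] {ℓ : ℕ}
    {g : MvPolynomial (Fin 2) K} (hg : IsWeightedHomogeneous multigrading g (6, 6, 14 * ℓ + 5)) :
    g = ∑ i : Fin (2 * ℓ), C (coeff (cofactorExponent ℓ i) g) * X 0 ^ (7 * (i : ℕ) + 6) *
      X 1 ^ (7 * (2 * ℓ - 1 - (i : ℕ)) + 6) := by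
  simp_rw [C_mul_X_pow_mul_X_pow]
  exact hg.eq_sum_monomial (cofactorExponent_injective ℓ) fun _ => exists_cofactorExponent_eq

theorem homogeneous_cofactor_general {K : Type*} [Field K] (ℓ : ℕ)
    (h : (X 0 : MvPolynomial (Fin 2) K) ^ (21 * ℓ + 6) * X 1 ^ (21 * ℓ + 6) ∈
      Ideal.span {(X 0 : MvPolynomial (Fin 2) K) ^ (28 * ℓ + 8), X 1 ^ (28 * ℓ + 8),
        (X 0 ^ 7 + X 1 ^ 7) ^ (4 * ℓ + 1)}) :
    ∃ a : Fin (2 * ℓ) → K,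
      (X 0 : MvPolynomial (Fin 2) K) ^ (21 * ℓ + 6) * X 1 ^ (21 * ℓ + 6) -
          (∑ i : Fin (2 * ℓ), C (a i) * X 0 ^ (7 * (i : ℕ) + 6) *
            X 1 ^ (7 * (2 * ℓ - 1 - (i : ℕ)) + 6)) * (X 0 ^ 7 + X 1 ^ 7) ^ (4 * ℓ + 1) ∈
        Ideal.span {(X 0 : MvPolynomial (Fin 2) K) ^ (28 * ℓ + 8), X 1 ^ (28 * ℓ + 8)} := by
  classical
  obtain ⟨r, hr, q, hq⟩ := Ideal.exists_add_mul_of_mem_span_triple h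
  let n : ZMod 7 × ZMod 7 × ℕ := (6, 6, 14 * ℓ + 5)
  let g := weightedHomogeneousComponent multigrading n q
  have hdeg : (((21 * ℓ + 6 : ℕ) : ZMod 7), ((21 * ℓ + 6 : ℕ) : ZMod 7), 21 * ℓ + 6 + (21 * ℓ + 6))
      = n + (4 * ℓ + 1) • (0, 0, 7) := by
    have h6 : ((21 * ℓ + 6 : ℕ) : ZMod 7) = 6 := by
      push_cast
      rw [show (21 : ZMod 7) = 0 by decide]
      ring
    simp only [n, h6, Prod.smul_mk, Prod.mk_add_mk, smul_zero, add_zero, smul_eq_mul]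
    ring_nf
  have hcomp : (X 0 : MvPolynomial (Fin 2) K) ^ (21 * ℓ + 6) * X 1 ^ (21 * ℓ + 6) =
      weightedHomogeneousComponent multigrading (n + (4 * ℓ + 1) • (0, 0, 7)) r +
        g * (X 0 ^ 7 + X 1 ^ 7) ^ (4 * ℓ + 1) := by
    rw [← weightedHomogeneousComponent_mul_of_isWeightedHomogeneous
      (isWeightedHomogeneous_X_pow_seven_add_pow K _), ← map_add, ← hq, ← hdeg,
      (isWeightedHomogeneous_X_pow_mul_X_pow K _ _).weightedHomogeneousComponent_same]
  refine ⟨fun i => coeff (cofactorExponent ℓ i) g, ?_⟩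
  rw [← eq_sum_cofactorExponent_monomial (weightedHomogeneousComponent_isWeightedHomogeneous n q),
    hcomp, add_sub_cancel_right]
  exact weightedHomogeneousComponent_mem_of_mem K multigrading
    (isHomogeneous_span_X_pow_pair _ _ _ _ _) hr _

/-- For p = 7ℓ+2 prime, ℓ ≥ 1, char K = p: a membership
x^{21ℓ+6} y^{21ℓ+6} ∈ (x^{28ℓ+8}, y^{28ℓ+8}, (x^7+y^7)^{4ℓ+1}) in K[x,y] yields
a₀,…,a_{2ℓ-1} ∈ K with x^{21ℓ+6} y^{21ℓ+6} ≡
(∑ aᵢ x^{7i+6} y^{7(2ℓ-1-i)+6})·(x^7+y^7)^{4ℓ+1} mod (x^{28ℓ+8}, y^{28ℓ+8}). -/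
theorem homogeneous_cofactor {K : Type*} [Field K] (p ℓ : ℕ) (hl : 1 ≤ ℓ)
    (hp : p.Prime) (hpl : p = 7 * ℓ + 2) [CharP K p]
    (h : (X 0 : MvPolynomial (Fin 2) K) ^ (21 * ℓ + 6) * X 1 ^ (21 * ℓ + 6) ∈
      Ideal.span {(X 0 : MvPolynomial (Fin 2) K) ^ (28 * ℓ + 8), X 1 ^ (28 * ℓ + 8),
        (X 0 ^ 7 + X 1 ^ 7) ^ (4 * ℓ + 1)}) :
    ∃ a : Fin (2 * ℓ) → K,
      (X 0 : MvPolynomial (Fin 2) K) ^ (21 * ℓ + 6) * X 1 ^ (21 * ℓ + 6) -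
          (∑ i : Fin (2 * ℓ), C (a i) * X 0 ^ (7 * (i : ℕ) + 6) *
            X 1 ^ (7 * (2 * ℓ - 1 - (i : ℕ)) + 6)) * (X 0 ^ 7 + X 1 ^ 7) ^ (4 * ℓ + 1) ∈
        Ideal.span {(X 0 : MvPolynomial (Fin 2) K) ^ (28 * ℓ + 8), X 1 ^ (28 * ℓ + 8)} :=
  homogeneous_cofactor_general ℓ h
end
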